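/- Let a, b ∈ ℝ³ be unit vectors and set P := K⁺(a)K⁻(b). Then P is symmetric (Pᵀ = P), orthogonal, satisfies P² = I₄ and tr P = 0, and P ≠ ±I₄; consequently its (+1)-eigenspace and its (−1)-eigenspace are each 2-dimensional. Moreover both eigenspaces are invariant under K⁺(a) and under K⁻(b). -/

import Mathlib

open Matrix

/-- The matrix of `K_{s₁⁺}`: e₁↦e₂, e₂↦−e₁, e₃↦e₄, e₄↦−e₃. -/
def J1p : Matrix (Fin 4) (Fin 4) ℝ := !![0,-1,0,0; 1,0,0,0; 0,0,0,-1; 0,0,1,0]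
/-- The matrix of `K_{s₂⁺}`: e₁↦e₃, e₃↦−e₁, e₄↦e₂, e₂↦−e₄. -/
def J2p : Matrix (Fin 4) (Fin 4) ℝ := !![0,0,-1,0; 0,0,0,1; 1,0,0,0; 0,-1,0,0]
/-- The matrix of `K_{s₃⁺}`: e₁↦e₄, e₄↦−e₁, e₂↦e₃, e₃↦−e₂. -/
def J3p : Matrix (Fin 4) (Fin 4) ℝ := !![0,0,0,-1; 0,0,-1,0; 0,1,0,0; 1,0,0,0]
/-- The matrix of `K_{s₁⁻}`: e₁↦e₂, e₂↦−e₁, e₃↦−e₄, e₄↦e₃. -/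
def J1m : Matrix (Fin 4) (Fin 4) ℝ := !![0,-1,0,0; 1,0,0,0; 0,0,0,1; 0,0,-1,0]
/-- The matrix of `K_{s₂⁻}`: e₁↦e₃, e₃↦−e₁, e₄↦−e₂, e₂↦e₄. -/
def J2m : Matrix (Fin 4) (Fin 4) ℝ := !![0,0,-1,0; 0,0,0,-1; 1,0,0,0; 0,1,0,0]
/-- The matrix of `K_{s₃⁻}`: e₁↦e₄, e₄↦−e₁, e₂↦−e₃, e₃↦e₂. -/
def J3m : Matrix (Fin 4) (Fin 4) ℝ := !![0,0,0,-1; 0,0,1,0; 0,-1,0,0; 1,0,0,0]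

/-- `K⁺(a) = a₁J₁⁺ + a₂J₂⁺ + a₃J₃⁺`. -/
def Kp (a : Fin 3 → ℝ) : Matrix (Fin 4) (Fin 4) ℝ := a 0 • J1p + a 1 • J2p + a 2 • J3p
/-- `K⁻(a) = a₁J₁⁻ + a₂J₂⁻ + a₃J₃⁻`. -/
def Km (a : Fin 3 → ℝ) : Matrix (Fin 4) (Fin 4) ℝ := a 0 • J1m + a 1 • J2m + a 2 • J3m

/-!
Under ℝ⁴ ≅ ℍ, `e₁, e₂, e₃, e₄ ↦ 1, i, j, k`, the matrix `K⁺(a)` is left multiplication and `K⁻(b)`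
right multiplication by the imaginary quaternions with coordinates `a` and `b`. Hence `K⁺(a)` and
`K⁻(b)` are skew-symmetric, commute, and square to `-|a|²` and `-|b|²`, so `P = K⁺(a)K⁻(b)` is a
symmetric involution commuting with both factors, which therefore preserve its eigenspaces. An
involution `P` is diagonalisable with `tr P = dim E₊ - dim E₋`, so `tr P = 0` forces both
eigenspaces to be 2-dimensional.
-/

open Module End

theorem Module.End.two_mul_finrank_eigenspace_of_mul_self_eq_one {K V : Type*} [Field K]
    [CharZero K] [AddCommGroup V] [Module K V] [FiniteDimensional K V] {f : End K V}
    (hf : f * f = 1) {μ : K} (hμ : μ * μ = 1) :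
    2 * (finrank K (f.eigenspace μ) : K) = finrank K V + μ * LinearMap.trace K V f := by
  -- `(1 + μ f) / 2` is a projection onto the `μ`-eigenspace, and the trace of a projection is
  -- the dimension of its image.
  have hproj : LinearMap.IsProj (f.eigenspace μ) ((2 : K)⁻¹ • (1 + μ • f)) := by
    constructor
    · intro x
      rw [mem_eigenspace_iff]
      have hfx : f (f x) = x := by simpa using congr($hf x)
      simp only [LinearMap.smul_apply, LinearMap.add_apply, Module.End.one_apply, map_smul,
        map_add, hfx, smul_add, smul_smul]
      rw [mul_left_comm, hμ, mul_one, add_comm, mul_comm]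
    · intro x hx
      rw [mem_eigenspace_iff] at hx
      simp only [LinearMap.smul_apply, LinearMap.add_apply, Module.End.one_apply, hx, smul_smul,
        hμ, one_smul, ← two_smul K x]
      simp
  have htrace := hproj.trace
  simp only [map_smul, map_add, LinearMap.trace_one, smul_eq_mul] at htrace
  rw [← htrace]
  field_simp

theorem Matrix.mulVec_mem_eigenspace_of_commute {n K : Type*} [Fintype n] [DecidableEq n]
    [Field K] {A B : Matrix n n K} (h : Commute A B) {μ : K} {x : n → K}
    (hx : x ∈ eigenspace A.mulVecLin μ) : B *ᵥ x ∈ eigenspace A.mulVecLin μ :=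
  mapsTo_genEigenspace_of_comm (h.map (Matrix.toLinAlgEquiv' (R := K) (n := n))) μ 1 hx

section Twistor

variable (a b : Fin 3 → ℝ)

theorem Kp_eq :
    Kp a = !![0, -a 0, -a 1, -a 2; a 0, 0, -a 2, a 1; a 1, a 2, 0, -a 0; a 2, -a 1, a 0, 0] := by
  ext i j
  fin_cases i <;> fin_cases j <;> simp [Kp, J1p, J2p, J3p]

theorem Km_eq :
    Km b = !![0, -b 0, -b 1, -b 2; b 0, 0, b 2, -b 1; b 1, -b 2, 0, b 0; b 2, b 1, -b 0, 0] := by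
  ext i j
  fin_cases i <;> fin_cases j <;> simp [Km, J1m, J2m, J3m]

theorem transpose_Kp : (Kp a)ᵀ = -Kp a := by
  rw [Kp_eq]
  ext i j
  fin_cases i <;> fin_cases j <;> simp

theorem transpose_Km : (Km b)ᵀ = -Km b := by
  rw [Km_eq]
  ext i j
  fin_cases i <;> fin_cases j <;> simp

theorem Kp_mul_self : Kp a * Kp a = -(a ⬝ᵥ a) • (1 : Matrix (Fin 4) (Fin 4) ℝ) := by
  rw [Kp_eq]
  ext i j
  fin_cases i <;> fin_cases j <;>
    simp [Matrix.mul_apply, Fin.sum_univ_four, dotProduct, Fin.sum_univ_three] <;> ring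

theorem Km_mul_self : Km b * Km b = -(b ⬝ᵥ b) • (1 : Matrix (Fin 4) (Fin 4) ℝ) := by
  rw [Km_eq]
  ext i j
  fin_cases i <;> fin_cases j <;>
    simp [Matrix.mul_apply, Fin.sum_univ_four, dotProduct, Fin.sum_univ_three] <;> ring

theorem commute_Kp_Km : Commute (Kp a) (Km b) := by
  rw [Kp_eq, Km_eq, Commute, SemiconjBy]
  ext i j
  fin_cases i <;> fin_cases j <;> simp [Matrix.mul_apply, Fin.sum_univ_four] <;> ring

theorem trace_Kp_mul_Km : (Kp a * Km b).trace = 0 := by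
  rw [Kp_eq, Km_eq]
  simp [Matrix.trace, Fin.sum_univ_four]
  ring

theorem transpose_Kp_mul_Km : (Kp a * Km b)ᵀ = Kp a * Km b := by
  rw [transpose_mul, transpose_Kp, transpose_Km, neg_mul_neg, (commute_Kp_Km a b).eq]

theorem Kp_mul_Km_mul_self :
    Kp a * Km b * (Kp a * Km b) = ((a ⬝ᵥ a) * (b ⬝ᵥ b)) • (1 : Matrix (Fin 4) (Fin 4) ℝ) := by
  rw [(commute_Kp_Km a b).symm.mul_mul_mul_comm, Kp_mul_self, Km_mul_self, smul_mul_smul,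
    mul_one, neg_mul_neg]

theorem finrank_eigenspace_Kp_mul_Km {a b : Fin 3 → ℝ} (ha : a ⬝ᵥ a = 1) (hb : b ⬝ᵥ b = 1)
    {μ : ℝ} (hμ : μ * μ = 1) :
    finrank ℝ (eigenspace (Kp a * Km b).mulVecLin μ) = 2 := by
  have hsq : (Kp a * Km b).mulVecLin * (Kp a * Km b).mulVecLin = 1 := by
    rw [Module.End.mul_eq_comp, ← Matrix.mulVecLin_mul, Kp_mul_Km_mul_self, ha, hb, mul_one,
      one_smul, Matrix.mulVecLin_one]
    rfl
  have htrace : LinearMap.trace ℝ _ (Kp a * Km b).mulVecLin = 0 := by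
    rw [← Matrix.toLin'_apply', Matrix.trace_toLin'_eq, trace_Kp_mul_Km]
  have h := two_mul_finrank_eigenspace_of_mul_self_eq_one hsq hμ
  rw [htrace] at h
  norm_num at h
  exact_mod_cast (by linarith : (finrank ℝ (eigenspace (Kp a * Km b).mulVecLin μ) : ℝ) = 2)

end Twistor

/-- For unit a, b ∈ ℝ³, P = K⁺(a)K⁻(b) is a symmetric orthogonal involution with
trace 0, P ≠ ±I₄, its (±1)-eigenspaces are 2-dimensional, and both eigenspaces are
invariant under K⁺(a) and K⁻(b). -/
theorem stmt6 (a b : Fin 3 → ℝ) (ha : a ⬝ᵥ a = 1) (hb : b ⬝ᵥ b = 1) :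
    (Kp a * Km b)ᵀ = Kp a * Km b ∧
    (Kp a * Km b)ᵀ * (Kp a * Km b) = 1 ∧
    (Kp a * Km b) * (Kp a * Km b) = 1 ∧
    (Kp a * Km b).trace = 0 ∧
    Kp a * Km b ≠ 1 ∧ Kp a * Km b ≠ -1 ∧
    Module.finrank ℝ (Module.End.eigenspace (Kp a * Km b).mulVecLin 1) = 2 ∧
    Module.finrank ℝ (Module.End.eigenspace (Kp a * Km b).mulVecLin (-1)) = 2 ∧
    (∀ μ : ℝ, μ = 1 ∨ μ = -1 →
      ∀ x ∈ Module.End.eigenspace (Kp a * Km b).mulVecLin μ,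
        Kp a *ᵥ x ∈ Module.End.eigenspace (Kp a * Km b).mulVecLin μ ∧
        Km b *ᵥ x ∈ Module.End.eigenspace (Kp a * Km b).mulVecLin μ) := by
  have hcomm := commute_Kp_Km a b
  have hsq : Kp a * Km b * (Kp a * Km b) = 1 := by
    rw [Kp_mul_Km_mul_self, ha, hb, mul_one, one_smul]
  have htrace_one : (1 : Matrix (Fin 4) (Fin 4) ℝ).trace ≠ 0 := by simp
  refine ⟨transpose_Kp_mul_Km a b, by rw [transpose_Kp_mul_Km, hsq], hsq, trace_Kp_mul_Km a b,
    fun h => htrace_one ?_, fun h => htrace_one ?_,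
    finrank_eigenspace_Kp_mul_Km ha hb (μ := 1) (by norm_num),
    finrank_eigenspace_Kp_mul_Km ha hb (μ := -1) (by norm_num), fun μ _ x hx => ⟨?_, ?_⟩⟩
  · rw [← h, trace_Kp_mul_Km]
  · rw [← neg_eq_zero, ← trace_neg, ← h, trace_Kp_mul_Km]
  · exact Matrix.mulVec_mem_eigenspace_of_commute ((Commute.refl (Kp a)).mul_left hcomm.symm) hx
  · exact Matrix.mulVec_mem_eigenspace_of_commute (hcomm.mul_left (Commute.refl (Km b))) hx
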